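/- Let (s_R, p_R, z_R) be a feasible point of problem (P_R1) that attains its optimal value. Define p̃ := (diag(z_R) − B)^{-1}λ and s̃ := s_R + diag(α)^{-1}·B·(p_R − p̃). Then (s̃, p̃) is feasible for problem (P), i.e., s̃ ≥ 0, p̃ ≥ 0 and g(s̃, p̃) = 0, and moreover f(s_R, p_R) ≤ f* ≤ f(s̃, p̃). -/

import Mathlib

noncomputable section

open Matrix

/-- Irreducibility of a nonnegative matrix. -/
def MatIrred {N : ℕ} (B : Matrix (Fin N) (Fin N) ℝ) : Prop :=
  ∀ i j, ∃ k : ℕ, 1 ≤ k ∧ 0 < (B ^ k) i j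

/-- The map `g(s,p)` with `g_i(s,p) = (1 - p_i)(λ_i + (Bp)_i) - (α_i s_i + δ_i) p_i`. -/
def gfun {N : ℕ} (B : Matrix (Fin N) (Fin N) ℝ) (lam δ α s p : Fin N → ℝ) : Fin N → ℝ :=
  fun i => (1 - p i) * (lam i + B.mulVec p i) - (α i * s i + δ i) * p i

/-- The objective `f(s,p) = w(s) + cᵀp`. -/
def fobj {N : ℕ} (w : (Fin N → ℝ) → ℝ) (c : Fin N → ℝ) (s p : Fin N → ℝ) : ℝ :=
  w s + ∑ i, c i * p i

/-- Feasibility for the original problem (P). -/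
def FeasP {N : ℕ} (B : Matrix (Fin N) (Fin N) ℝ) (lam δ α : Fin N → ℝ)
    (s p : Fin N → ℝ) : Prop :=
  (∀ i, 0 ≤ s i) ∧ (∀ i, 0 ≤ p i) ∧ gfun B lam δ α s p = 0

/-- The set `Ω` of nonnegative `z` such that `diag(z) - B` has all eigenvalues with
positive real part. -/
def OmegaSet {N : ℕ} (B : Matrix (Fin N) (Fin N) ℝ) : Set (Fin N → ℝ) :=
  {z | (∀ i, 0 ≤ z i) ∧
    ∀ μ ∈ spectrum ℂ ((Matrix.diagonal z - B).map Complex.ofReal), 0 < μ.re}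

/-- Feasibility for the convex relaxation (P_R1). -/
def FeasPR1 {N : ℕ} (B : Matrix (Fin N) (Fin N) ℝ) (lam δ α : Fin N → ℝ)
    (s p z : Fin N → ℝ) : Prop :=
  (∀ i, 0 ≤ s i) ∧ (∀ i, p i ≤ 1) ∧ z ∈ OmegaSet B ∧
  (∀ i, (Matrix.diagonal z - B)⁻¹.mulVec lam i ≤ p i) ∧
  (∀ i, z i = α i * s i + δ i + lam i + B.mulVec p i)

/-!
With `z = α ∘ s + δ + λ + B p`, the constraint of (P) reads `g(s, p) = λ - (diag z - B) p`.
So a feasible point `(s, p)` of (P) gives `(diag z - B) p = λ` with `p ≥ 0`; comparing an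
eigenvector `w` of `diag z - B` with `p` at an index maximising `|w_i| / p_i`, irreducibility
of `B` and `λ ≠ 0` push every eigenvalue into the open right half plane, so `(s, p, z)` is
feasible for (P_R1) and `f(s_R, p_R) ≤ f(s, p)`. Conversely `s̃` is chosen so that
`z(s̃, p̃) = z_R`, whence `g(s̃, p̃) = λ - (diag z_R - B) p̃ = 0`; nonnegativity of
`p̃ = (diag z_R - B)⁻¹ λ` is the M-matrix property of `diag z_R - B`, obtained by continuation.
-/

section NonnegMatrix

variable {n : Type*} [Fintype n]

theorem diagonal_sub_mulVec_apply [DecidableEq n] {R : Type*} [CommRing R] (z : n → R)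
    (B : Matrix n n R) (x : n → R) (i : n) :
    ((diagonal z - B) *ᵥ x) i = z i * x i - (B *ᵥ x) i := by
  simp [sub_mulVec, mulVec_diagonal]

theorem mulVec_apply_nonneg {B : Matrix n n ℝ} (hB : ∀ i j, 0 ≤ B i j) {v : n → ℝ}
    (hv : ∀ j, 0 ≤ v j) (i : n) : 0 ≤ (B *ᵥ v) i :=
  Finset.sum_nonneg fun j _ => mul_nonneg (hB i j) (hv j)

theorem eq_zero_of_mulVec_apply_nonpos {B : Matrix n n ℝ} (hB : ∀ i j, 0 ≤ B i j)
    {v : n → ℝ} (hv : ∀ j, 0 ≤ v j) {i j : n} (h : (B *ᵥ v) i ≤ 0) (hij : 0 < B i j) :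
    v j = 0 := by
  have hterms := (Finset.sum_eq_zero_iff_of_nonneg fun k _ => mul_nonneg (hB i k) (hv k)).1
    (le_antisymm h (mulVec_apply_nonneg hB hv i))
  exact (mul_eq_zero.1 (hterms j (Finset.mem_univ j))).resolve_left hij.ne'

theorem nonneg_of_diagonal_sub_mulVec_nonneg [DecidableEq n] {B : Matrix n n ℝ}
    (hB : ∀ i j, 0 ≤ B i j) {d : n → ℝ} (hd : ∀ i, ∑ j, B i j < d i) {x : n → ℝ}
    (hx : ∀ i, 0 ≤ ((diagonal d - B) *ᵥ x) i) : ∀ i, 0 ≤ x i := by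
  by_contra! ⟨k, hk⟩
  have : Nonempty n := ⟨k⟩
  obtain ⟨i, hi⟩ := Finite.exists_min x
  have hxi : x i < 0 := (hi k).trans_lt hk
  have hBx : x i * ∑ j, B i j ≤ (B *ᵥ x) i := by
    rw [Finset.mul_sum]
    exact Finset.sum_le_sum fun j _ => by nlinarith [hB i j, hi j]
  have hMxi := hx i
  rw [diagonal_sub_mulVec_apply] at hMxi
  nlinarith [hd i]

theorem det_add_scalar_ne_zero [DecidableEq n] {A : Matrix n n ℝ}
    (hA : ∀ μ ∈ spectrum ℂ (A.map Complex.ofReal), 0 < μ.re) {r : ℝ} (hr : 0 ≤ r) :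
    (A + scalar n r).det ≠ 0 := by
  intro h
  have hneg : algebraMap ℂ (Matrix n n ℂ) (-r) - A.map Complex.ofReal
      = -(A + scalar n r).map Complex.ofReal := by
    ext i j
    by_cases hij : i = j <;> simp [algebraMap_eq_diagonal, hij]; ring
  have hdet : ((A + scalar n r).map Complex.ofReal).det = 0 :=
    (Complex.ofRealHom.map_det _).symm.trans (by rw [h, map_zero])
  have hmem : (-r : ℂ) ∈ spectrum ℂ (A.map Complex.ofReal) := by
    rw [spectrum.mem_iff, isUnit_iff_isUnit_det, hneg, det_neg, hdet, mul_zero]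
    exact not_isUnit_zero
  simpa [hr.not_gt] using hA _ hmem

theorem exists_mulVec_eq_smul_of_mem_spectrum [DecidableEq n] {K : Type*} [Field K]
    {A : Matrix n n K} {μ : K} (hμ : μ ∈ spectrum K A) : ∃ v ≠ 0, A *ᵥ v = μ • v := by
  rw [← spectrum_toLin', ← Module.End.hasEigenvalue_iff_mem_spectrum] at hμ
  obtain ⟨v, hv⟩ := hμ.exists_hasEigenvector
  exact ⟨v, hv.2, by simpa using hv.apply_eq_smul⟩

theorem mul_norm_le_mulVec_norm_of_re_nonpos [DecidableEq n] {B : Matrix n n ℝ}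
    (hB : ∀ i j, 0 ≤ B i j) {z : n → ℝ} {μ : ℂ} {w : n → ℂ}
    (hw : (diagonal z - B).map Complex.ofReal *ᵥ w = μ • w) (hμ : μ.re ≤ 0) (i : n) :
    z i * ‖w i‖ ≤ (B *ᵥ fun j => ‖w j‖) i := by
  have hmap : (diagonal z - B).map Complex.ofReal
      = diagonal (fun i => (z i : ℂ)) - B.map Complex.ofReal := by
    simp [Matrix.map_sub, diagonal_map]
  have heig := congrFun hw i
  rw [hmap, diagonal_sub_mulVec_apply, Pi.smul_apply, smul_eq_mul] at heig
  have hz : z i ≤ ‖(z i : ℂ) - μ‖ := by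
    calc z i ≤ ((z i : ℂ) - μ).re := by simpa using hμ
      _ ≤ ‖(z i : ℂ) - μ‖ := Complex.re_le_norm _
  calc z i * ‖w i‖ ≤ ‖(z i : ℂ) - μ‖ * ‖w i‖ := mul_le_mul_of_nonneg_right hz (norm_nonneg _)
    _ = ‖(B.map Complex.ofReal *ᵥ w) i‖ := by
      rw [← norm_mul]
      congr 1
      linear_combination heig
    _ ≤ ∑ j, ‖(B i j : ℂ) * w j‖ := norm_sum_le _ _
    _ = (B *ᵥ fun j => ‖w j‖) i := by
      simp only [mulVec, dotProduct, norm_mul, Complex.norm_real, Real.norm_of_nonneg (hB i _)]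

theorem mem_of_pow_apply_pos [DecidableEq n] {B : Matrix n n ℝ}
    (hB : ∀ i j, 0 ≤ B i j) {S : Set n} (hS : ∀ i ∈ S, ∀ j, 0 < B i j → j ∈ S) (k : ℕ)
    {i j : n} (hi : i ∈ S) (hk : 0 < (B ^ k) i j) : j ∈ S := by
  induction k generalizing j with
  | zero =>
    rcases eq_or_ne i j with rfl | hij
    · exact hi
    · simp [one_apply_ne hij] at hk
  | succ k ih =>
    rw [pow_succ, mul_apply] at hk
    obtain ⟨l, -, hl⟩ := Finset.exists_lt_of_sum_lt (s := Finset.univ)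
      (f := fun _ => (0 : ℝ)) (by simpa using hk)
    have hBlj : 0 < B l j := (hB l j).lt_of_ne fun h => by simp [← h] at hl
    exact hS l (ih (pos_of_mul_pos_left hl (hB l j))) j hBlj

end NonnegMatrix

namespace MatIrred

variable {N : ℕ} {B : Matrix (Fin N) (Fin N) ℝ}

theorem mem_of_closed (hirr : MatIrred B) (hB : ∀ i j, 0 ≤ B i j) {S : Set (Fin N)}
    (hS : ∀ i ∈ S, ∀ j, 0 < B i j → j ∈ S) {i : Fin N} (hi : i ∈ S) (j : Fin N) : j ∈ S :=
  let ⟨k, _, hk⟩ := hirr i j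
  mem_of_pow_apply_pos hB hS k hi hk

theorem pos_of_diagonal_sub_mulVec_eq (hirr : MatIrred B) (hB : ∀ i j, 0 ≤ B i j)
    {z p lam : Fin N → ℝ} (hp : ∀ i, 0 ≤ p i) (hlam : ∀ i, 0 ≤ lam i) (hlam0 : lam ≠ 0)
    (h : (diagonal z - B) *ᵥ p = lam) (i : Fin N) : 0 < p i := by
  refine (hp i).lt_of_ne fun hpi => hlam0 ?_
  have hzero : ∀ j, p j = 0 := by
    refine hirr.mem_of_closed hB (S := {j | p j = 0}) (fun k hk j hkj => ?_) hpi.symm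
    have hk' := congrFun h k
    rw [diagonal_sub_mulVec_apply, Set.mem_ofPred.1 hk] at hk'
    exact eq_zero_of_mulVec_apply_nonpos hB hp (by linarith [hlam k]) hkj
  rw [← h, show p = 0 from funext hzero, mulVec_zero]

theorem eq_zero_of_mul_le_mulVec (hirr : MatIrred B) (hB : ∀ i j, 0 ≤ B i j)
    {z p lam u : Fin N → ℝ} (hp : ∀ i, 0 < p i) (hlam : ∀ i, 0 ≤ lam i)
    (h : (diagonal z - B) *ᵥ p = lam) (hu : ∀ i, 0 ≤ u i) (hu0 : u ≠ 0)
    (hsub : ∀ i, z i * u i ≤ (B *ᵥ u) i) : lam = 0 := by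
  obtain ⟨i₁, hi₁⟩ := Function.ne_iff.1 hu0
  have : Nonempty (Fin N) := ⟨i₁⟩
  obtain ⟨i₀, hi₀⟩ := Finite.exists_max fun i => u i / p i
  set Y := u i₀ / p i₀
  have hle : ∀ i, u i ≤ Y * p i := fun i => (div_le_iff₀ (hp i)).1 (hi₀ i)
  have hY : 0 < Y :=
    pos_of_mul_pos_left (((hu i₁).lt_of_ne (Ne.symm hi₁)).trans_le (hle i₁)) (hp i₁).le
  -- At an index where `u / p` is maximal, `hsub` and `h` squeeze the slack `Y • p - u`.
  have hmax : ∀ i, u i = Y * p i → lam i = 0 ∧ ∀ j, 0 < B i j → u j = Y * p j := by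
    intro i hi
    have hslack_nn : ∀ j, 0 ≤ (Y • p - u) j := fun j => sub_nonneg.2 (hle j)
    have hslack : (B *ᵥ (Y • p - u)) i ≤ -(Y * lam i) := by
      have hi' := congrFun h i
      rw [diagonal_sub_mulVec_apply] at hi'
      have := hsub i
      rw [hi] at this
      rw [mulVec_sub, mulVec_smul, Pi.sub_apply, Pi.smul_apply, smul_eq_mul]
      linear_combination this - Y * hi'
    have hlami : lam i = 0 := by
      nlinarith [hlam i, mulVec_apply_nonneg hB hslack_nn i]
    refine ⟨hlami, fun j hij => ?_⟩
    have := eq_zero_of_mulVec_apply_nonpos hB hslack_nn (by simpa [hlami] using hslack) hij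
    simp only [Pi.sub_apply, Pi.smul_apply, smul_eq_mul] at this
    linarith
  have hall := hirr.mem_of_closed hB (S := {i | u i = Y * p i})
    (fun i hi j hij => (hmax i hi).2 j hij) (i := i₀) (div_mul_cancel₀ _ (hp i₀).ne').symm
  exact funext fun i => (hmax i (hall i)).1

theorem spectrum_re_pos (hirr : MatIrred B) (hB : ∀ i j, 0 ≤ B i j)
    {z p lam : Fin N → ℝ} (hp : ∀ i, 0 ≤ p i) (hlam : ∀ i, 0 ≤ lam i) (hlam0 : lam ≠ 0)
    (h : (diagonal z - B) *ᵥ p = lam) :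
    ∀ μ ∈ spectrum ℂ ((diagonal z - B).map Complex.ofReal), 0 < μ.re := by
  intro μ hμ
  by_contra! hre
  obtain ⟨w, hw0, hw⟩ := exists_mulVec_eq_smul_of_mem_spectrum hμ
  have hnorm0 : (fun i => ‖w i‖) ≠ 0 := fun hu =>
    hw0 (funext fun i => by simpa using congrFun hu i)
  exact hlam0 <| hirr.eq_zero_of_mul_le_mulVec hB
    (hirr.pos_of_diagonal_sub_mulVec_eq hB hp hlam hlam0 h) hlam h (fun i => norm_nonneg _)
    hnorm0 (mul_norm_le_mulVec_norm_of_re_nonpos hB hw hre)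

open Filter Set in
/-- Continuation in `r` of `(diagonal (z + r) - B)⁻¹ *ᵥ lam` from large `r`, where
diagonal dominance gives positivity, down to `r = 0`: the spectral condition keeps the matrix
invertible along the way, and `pos_of_diagonal_sub_mulVec_eq` keeps the limit positive. -/
theorem inv_mulVec_pos (hirr : MatIrred B) (hB : ∀ i j, 0 ≤ B i j) {z lam : Fin N → ℝ}
    (hspec : ∀ μ ∈ spectrum ℂ ((diagonal z - B).map Complex.ofReal), 0 < μ.re)
    (hlam : ∀ i, 0 ≤ lam i) (hlam0 : lam ≠ 0) (i : Fin N) :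
    0 < ((diagonal z - B)⁻¹ *ᵥ lam) i := by
  set A : ℝ → Matrix (Fin N) (Fin N) ℝ := fun r => diagonal (fun i => z i + r) - B
  set x : ℝ → Fin N → ℝ := fun r => (A r)⁻¹ *ᵥ lam
  have hAc : Continuous A :=
    (Continuous.matrix_diagonal (continuous_pi fun _ => continuous_const.add continuous_id)).sub
      continuous_const
  have hdet : ∀ r, 0 ≤ r → (A r).det ≠ 0 := fun r hr => by
    convert det_add_scalar_ne_zero hspec hr using 2
    ext i j
    by_cases hij : i = j <;> simp [A, hij, sub_add_eq_add_sub]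
  have hAx : ∀ r, 0 ≤ r → A r *ᵥ x r = lam := fun r hr => by
    rw [mulVec_mulVec, mul_nonsing_inv _ (isUnit_iff_ne_zero.2 (hdet r hr)), one_mulVec]
  have hpos : ∀ r, 0 ≤ r → (∀ i, 0 ≤ x r i) → ∀ i, 0 < x r i := fun r hr hx =>
    hirr.pos_of_diagonal_sub_mulVec_eq hB hx hlam hlam0 (hAx r hr)
  have hcont : ∀ r, (A r).det ≠ 0 → ContinuousAt x r := fun r hr =>
    (continuous_id.matrix_mulVec continuous_const).continuousAt.comp
      ((continuousAt_matrix_inv _ (by rw [Ring.inverse_eq_inv']; exact continuousAt_inv₀ hr)).comp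
        hAc.continuousAt)
  set U := {r | (A r).det ≠ 0 ∧ ∀ i, 0 < x r i}
  have hU : IsOpen U := isOpen_iff_mem_nhds.2 fun r ⟨hr, hxr⟩ =>
    (hAc.matrix_det.continuousAt.eventually_ne hr).and <| eventually_all.2 fun i =>
      ((continuous_apply i).continuousAt.comp (hcont r hr)).eventually_const_lt (hxr i)
  obtain ⟨r₀, hr₀, hdom⟩ : ∃ r₀ : ℝ, 0 ≤ r₀ ∧ ∀ i, ∑ j, B i j < z i + r₀ := by
    obtain ⟨M, hM⟩ := Finite.exists_le fun i => ∑ j, B i j - z i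
    exact ⟨max 0 (M + 1), le_max_left _ _, fun i => by linarith [hM i, le_max_right 0 (M + 1)]⟩
  have hr₀U : r₀ ∈ U := ⟨hdet r₀ hr₀, hpos r₀ hr₀ <|
    nonneg_of_diagonal_sub_mulVec_nonneg hB hdom (by rw [hAx r₀ hr₀]; exact hlam)⟩
  have hclosure : closure U ∩ Ici 0 ⊆ U := by
    rintro r ⟨hrU, hr⟩
    refine ⟨hdet r hr, hpos r hr fun i => ?_⟩
    have hsub : closure (x '' U) ⊆ {v | 0 ≤ v i} :=
      closure_minimal (image_subset_iff.2 fun r' hr' => (hr'.2 i).le)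
        (isClosed_le continuous_const (continuous_apply i))
    exact hsub (mem_closure_image (hcont r (hdet r hr)) hrU)
  have h0 : (0 : ℝ) ∈ U :=
    isPreconnected_Ici.subset_of_closure_inter_subset hU ⟨r₀, hr₀, hr₀U⟩ hclosure self_mem_Ici
  simpa [x, A] using h0.2 i

end MatIrred

def zfun {N : ℕ} (B : Matrix (Fin N) (Fin N) ℝ) (lam δ α s p : Fin N → ℝ) : Fin N → ℝ :=
  fun i => α i * s i + δ i + lam i + (B *ᵥ p) i

section Problem

variable {N : ℕ} {B : Matrix (Fin N) (Fin N) ℝ} {lam δ α : Fin N → ℝ}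

theorem gfun_eq_sub_mulVec (s p : Fin N → ℝ) :
    gfun B lam δ α s p = lam - (diagonal (zfun B lam δ α s p) - B) *ᵥ p := by
  funext i
  simp only [gfun, zfun, Pi.sub_apply, diagonal_sub_mulVec_apply]
  ring

theorem le_one_of_gfun_eq_zero (hB : ∀ i j, 0 ≤ B i j) (hlam : ∀ i, 0 ≤ lam i)
    (hδ : ∀ i, 0 < δ i) (hα : ∀ i, 0 < α i) {s p : Fin N → ℝ} (hs : ∀ i, 0 ≤ s i)
    (hp : ∀ i, 0 ≤ p i) (hg : gfun B lam δ α s p = 0) (i : Fin N) : p i ≤ 1 := by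
  by_contra! hgt
  have hgi := congrFun hg i
  simp only [gfun, Pi.zero_apply] at hgi
  nlinarith [mulVec_apply_nonneg hB hp i, hlam i, hδ i, mul_nonneg (hα i).le (hs i)]

theorem feasPR1_of_feasP (hirr : MatIrred B) (hB : ∀ i j, 0 ≤ B i j)
    (hlam : ∀ i, 0 ≤ lam i) (hlam0 : lam ≠ 0) (hδ : ∀ i, 0 < δ i) (hα : ∀ i, 0 < α i)
    {s p : Fin N → ℝ} (h : FeasP B lam δ α s p) :
    FeasPR1 B lam δ α s p (zfun B lam δ α s p) := by
  obtain ⟨hs, hp, hg⟩ := h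
  set z := zfun B lam δ α s p
  have hMp : (diagonal z - B) *ᵥ p = lam := by
    rw [gfun_eq_sub_mulVec, sub_eq_zero] at hg
    exact hg.symm
  have hspec := hirr.spectrum_re_pos hB hp hlam hlam0 hMp
  have hdet : (diagonal z - B).det ≠ 0 := by simpa using det_add_scalar_ne_zero hspec le_rfl
  have hinv : (diagonal z - B)⁻¹ *ᵥ lam = p := by
    rw [← hMp, mulVec_mulVec, nonsing_inv_mul _ (isUnit_iff_ne_zero.2 hdet), one_mulVec]
  have hz : ∀ i, 0 ≤ z i := fun i => by
    simp only [z, zfun]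
    linarith [hδ i, hlam i, mul_nonneg (hα i).le (hs i), mulVec_apply_nonneg hB hp i]
  exact ⟨hs, le_one_of_gfun_eq_zero hB hlam hδ hα hs hp hg, ⟨hz, hspec⟩,
    fun i => (congrFun hinv i).le, fun i => rfl⟩

end Problem

theorem statement7_general {N : ℕ}
    (B : Matrix (Fin N) (Fin N) ℝ) (hBnn : ∀ i j, 0 ≤ B i j) (hBirr : MatIrred B)
    (lam δ α : Fin N → ℝ)
    (hlam : ∀ i, 0 ≤ lam i) (hlam0 : lam ≠ 0)
    (hδ : ∀ i, 0 < δ i) (hα : ∀ i, 0 < α i)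
    (w : (Fin N → ℝ) → ℝ)
    (c : Fin N → ℝ)
    (sR pR zR : Fin N → ℝ)
    (hfeas : FeasPR1 B lam δ α sR pR zR)
    (hopt : ∀ s p z : Fin N → ℝ, FeasPR1 B lam δ α s p z →
      fobj w c sR pR ≤ fobj w c s p)
    (ptil stil : Fin N → ℝ)
    (hptil : ptil = (Matrix.diagonal zR - B)⁻¹.mulVec lam)
    (hstil : stil = fun i => sR i + (α i)⁻¹ * B.mulVec (fun j => pR j - ptil j) i) :
    FeasP B lam δ α stil ptil ∧
    fobj w c sR pR ≤ sInf {v | ∃ s p, FeasP B lam δ α s p ∧ v = fobj w c s p} ∧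
    sInf {v | ∃ s p, FeasP B lam δ α s p ∧ v = fobj w c s p} ≤ fobj w c stil ptil := by
  obtain ⟨hsR, -, ⟨-, hspec⟩, hpRge, hzR⟩ := hfeas
  have hdet : (diagonal zR - B).det ≠ 0 := by simpa using det_add_scalar_ne_zero hspec le_rfl
  have hptil_pos : ∀ i, 0 < ptil i := hptil ▸ hBirr.inv_mulVec_pos hBnn hspec hlam hlam0
  have hMptil : (diagonal zR - B) *ᵥ ptil = lam := by
    rw [hptil, mulVec_mulVec, mul_nonsing_inv _ (isUnit_iff_ne_zero.2 hdet), one_mulVec]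
  have hBgap : ∀ i, 0 ≤ (B *ᵥ (pR - ptil)) i :=
    mulVec_apply_nonneg hBnn fun j => sub_nonneg.2 (hptil ▸ hpRge j)
  have hz : zfun B lam δ α stil ptil = zR := by
    funext i
    have hαi := (hα i).ne'
    rw [hzR i, zfun, hstil]
    simp only [← Pi.sub_def, mulVec_sub, Pi.sub_apply]
    field_simp
    ring
  have hfeasP : FeasP B lam δ α stil ptil :=
    ⟨fun i => hstil ▸ add_nonneg (hsR i) (mul_nonneg (inv_nonneg.2 (hα i).le) (hBgap i)),
      fun i => (hptil_pos i).le, by rw [gfun_eq_sub_mulVec, hz, hMptil, sub_self]⟩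
  have hlower : ∀ v ∈ {v | ∃ s p, FeasP B lam δ α s p ∧ v = fobj w c s p},
      fobj w c sR pR ≤ v := by
    rintro _ ⟨s, p, h, rfl⟩
    exact hopt s p _ (feasPR1_of_feasP hBirr hBnn hlam hlam0 hδ hα h)
  exact ⟨hfeasP, le_csInf ⟨_, stil, ptil, hfeasP, rfl⟩ hlower,
    csInf_le ⟨_, hlower⟩ ⟨stil, ptil, hfeasP, rfl⟩⟩

theorem statement7 {N : ℕ} (hN : 2 ≤ N)
    (B : Matrix (Fin N) (Fin N) ℝ) (hBnn : ∀ i j, 0 ≤ B i j) (hBirr : MatIrred B)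
    (lam δ α : Fin N → ℝ)
    (hlam : ∀ i, 0 ≤ lam i) (hlam0 : lam ≠ 0)
    (hδ : ∀ i, 0 < δ i) (hα : ∀ i, 0 < α i)
    (w : (Fin N → ℝ) → ℝ) (hwcont : Continuous w)
    (hwconv : ConvexOn ℝ Set.univ w)
    (hwmono : ∀ s s' : Fin N → ℝ, s ≤ s' → s ≠ s' → w s < w s')
    (c : Fin N → ℝ) (hc : ∀ i, 0 < c i)
    (sR pR zR : Fin N → ℝ)
    (hfeas : FeasPR1 B lam δ α sR pR zR)
    (hopt : ∀ s p z : Fin N → ℝ, FeasPR1 B lam δ α s p z →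
      fobj w c sR pR ≤ fobj w c s p)
    (ptil stil : Fin N → ℝ)
    (hptil : ptil = (Matrix.diagonal zR - B)⁻¹.mulVec lam)
    (hstil : stil = fun i => sR i + (α i)⁻¹ * B.mulVec (fun j => pR j - ptil j) i) :
    FeasP B lam δ α stil ptil ∧
    fobj w c sR pR ≤ sInf {v | ∃ s p, FeasP B lam δ α s p ∧ v = fobj w c s p} ∧
    sInf {v | ∃ s p, FeasP B lam δ α s p ∧ v = fobj w c s p} ≤ fobj w c stil ptil :=
  statement7_general B hBnn hBirr lam δ α hlam hlam0 hδ hα w c sR pR zR hfeas hopt ptil stil hptil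
    hstil
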